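/- Fix K > 0 and let BS(S,v) = S·Φ((ln(S/K) + v/2)/√v) − K·Φ((ln(S/K) − v/2)/√v) for S > 0, v > 0, where Φ is the standard normal cumulative distribution function. Then for every S > 0 and v > 0, the mixed second partial derivative ∂²BS/∂S∂v exists and equals (1/(4√v) − ln(S/K)/(2v^{3/2}))·(1/√(2π))·exp(−(ln(S/K) + v/2)²/(2v)). -/

import Mathlib

open Real MeasureTheory

/-!
The fundamental theorem of calculus gives `Φ' = φ`, the standard normal density. Writing
`d₁,₂ = (ln(S/K) ± v/2)/√v`, the identity `K φ(d₂) = S φ(d₁)` makes the `v`-derivatives of `d₁`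
and `d₂` enter only through `∂ᵥ(d₁ - d₂) = ∂ᵥ√v = 1/(2√v)`, so the vega is
`∂BS/∂v = S φ(d₁)/(2√v)`. Since `φ(d₁)` is an explicit exponential in `ln(S/K)`, differentiating
the vega in `S` gives the formula.
-/

/-- The standard normal cumulative distribution function. -/
noncomputable def stdNormalCDF (x : ℝ) : ℝ :=
  (Real.sqrt (2 * Real.pi))⁻¹ * ∫ t in Set.Iic x, Real.exp (-t ^ 2 / 2)

/-- The Black–Scholes call price as a function of spot `S` and total variance `v`,
with strike `K`. -/
noncomputable def BSprice (K S v : ℝ) : ℝ :=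
  S * stdNormalCDF ((Real.log (S / K) + v / 2) / Real.sqrt v)
    - K * stdNormalCDF ((Real.log (S / K) - v / 2) / Real.sqrt v)

theorem hasDerivAt_integral_Iic {f : ℝ → ℝ} (hint : Integrable f) (hcont : Continuous f)
    (x : ℝ) : HasDerivAt (fun y => ∫ t in Set.Iic y, f t) (f x) x := by
  have hsplit : ∀ y, ∫ t in Set.Iic y, f t = (∫ t in Set.Iic 0, f t) + ∫ t in (0 : ℝ)..y, f t :=
    fun y => by
      rw [← intervalIntegral.integral_Iic_sub_Iic hint.integrableOn hint.integrableOn]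
      ring
  rw [show (fun y => ∫ t in Set.Iic y, f t) = _ from funext hsplit]
  exact (intervalIntegral.integral_hasDerivAt_right hint.intervalIntegrable
    hcont.stronglyMeasurable.stronglyMeasurableAtFilter hcont.continuousAt).const_add _

theorem hasDerivAt_stdNormalCDF (x : ℝ) :
    HasDerivAt stdNormalCDF ((√(2 * π))⁻¹ * exp (-x ^ 2 / 2)) x := by
  have hint : Integrable fun t : ℝ => exp (-t ^ 2 / 2) := by
    convert integrable_exp_neg_mul_sq (by norm_num : (0 : ℝ) < 1 / 2) using 2 with t
    ring_nf
  exact (hasDerivAt_integral_Iic hint (by fun_prop) x).const_mul _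

theorem hasDerivAt_add_mul_div_sqrt (x c : ℝ) {v : ℝ} (hv : 0 < v) :
    HasDerivAt (fun u => (x + c * u) / √u) (c / (2 * √v) - x / (2 * v * √v)) v := by
  have hsv : √v ≠ 0 := (sqrt_pos.mpr hv).ne'
  refine ((((hasDerivAt_id' v).const_mul c).const_add x).div (hasDerivAt_sqrt hv.ne') hsv
    ).congr_deriv ?_
  have hsq : √v ^ 2 = v := sq_sqrt hv.le
  field_simp
  rw [hsq]
  ring

theorem neg_sq_div_sqrt_sq_div_two (y : ℝ) {v : ℝ} (hv : 0 < v) :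
    -(y / √v) ^ 2 / 2 = -y ^ 2 / (2 * v) := by
  rw [div_pow, sq_sqrt hv.le]
  ring

theorem exp_neg_sub_half_sq (x : ℝ) {v : ℝ} (hv : v ≠ 0) :
    exp (-(x + -1 / 2 * v) ^ 2 / (2 * v)) = exp x * exp (-(x + 1 / 2 * v) ^ 2 / (2 * v)) := by
  rw [← exp_add]
  congr 1
  field_simp
  ring

theorem hasDerivAt_BSprice_variance {K S v : ℝ} (hK : 0 < K) (hS : 0 < S) (hv : 0 < v) :
    HasDerivAt (fun u => BSprice K S u)
      ((√(2 * π))⁻¹ * S * exp (-(log (S / K) + v / 2) ^ 2 / (2 * v)) / (2 * √v)) v := by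
  set L := log (S / K)
  have hd₁ := (hasDerivAt_stdNormalCDF _).comp v (hasDerivAt_add_mul_div_sqrt L (1 / 2) hv)
  have hd₂ := (hasDerivAt_stdNormalCDF _).comp v (hasDerivAt_add_mul_div_sqrt L (-1 / 2) hv)
  have h := (hd₁.const_mul S).sub (hd₂.const_mul K)
  have hKS : K * exp (-(L + -1 / 2 * v) ^ 2 / (2 * v)) =
      S * exp (-(L + 1 / 2 * v) ^ 2 / (2 * v)) := by
    rw [exp_neg_sub_half_sq L hv.ne', exp_log (div_pos hS hK)]
    field_simp
  simp only [neg_sq_div_sqrt_sq_div_two _ hv] at h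
  have hBS : (fun u => BSprice K S u) =
      (fun u => S * (stdNormalCDF ∘ fun u => (L + 1 / 2 * u) / √u) u) -
        fun u => K * (stdNormalCDF ∘ fun u => (L + -1 / 2 * u) / √u) u := by
    funext u
    simp only [BSprice, Pi.sub_apply, Function.comp_apply, L]
    ring_nf
  rw [hBS, show v / 2 = 1 / 2 * v by ring]
  refine h.congr_deriv ?_
  linear_combination (-((√(2 * π))⁻¹ * (-1 / 2 / (2 * √v) - L / (2 * v * √v)))) * hKS

theorem hasDerivAt_mul_exp_neg_log_div_sq (K a v : ℝ) {S : ℝ} (hK : K ≠ 0) (hS : S ≠ 0) :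
    HasDerivAt (fun s => s * exp (-(log (s / K) + a) ^ 2 / (2 * v)))
      ((1 - (log (S / K) + a) / v) * exp (-(log (S / K) + a) ^ 2 / (2 * v))) S := by
  have hlog : HasDerivAt (fun s => log (s / K)) (1 / S) S := by
    refine ((hasDerivAt_id' S).div_const K).log (div_ne_zero hS hK) |>.congr_deriv ?_
    field_simp
  refine ((hasDerivAt_id' S).mul (((hlog.add_const a).pow 2).neg.div_const (2 * v)).exp
    ).congr_deriv ?_
  simp only [Pi.neg_apply, Pi.pow_apply]
  field_simp
  ring

/-- Mixed second derivative of the Black–Scholes price: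
`∂²BS/∂S∂v = (1/(4√v) − ln(S/K)/(2v^{3/2}))·(1/√(2π))·exp(−(ln(S/K)+v/2)²/(2v))`. -/
theorem stmt3 (K : ℝ) (hK : 0 < K) (S v : ℝ) (hS : 0 < S) (hv : 0 < v) :
    HasDerivAt (fun s : ℝ => deriv (fun u : ℝ => BSprice K s u) v)
      ((1 / (4 * Real.sqrt v) - Real.log (S / K) / (2 * v ^ ((3 : ℝ) / 2)))
        * (Real.sqrt (2 * Real.pi))⁻¹
        * Real.exp (-(Real.log (S / K) + v / 2) ^ 2 / (2 * v))) S := by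
  have hvega : (fun s => deriv (fun u => BSprice K s u) v) =ᶠ[nhds S]
      fun s => (√(2 * π))⁻¹ / (2 * √v) * (s * exp (-(log (s / K) + v / 2) ^ 2 / (2 * v))) := by
    filter_upwards [eventually_gt_nhds hS] with s hs
    rw [(hasDerivAt_BSprice_variance hK hs hv).deriv]
    ring
  refine (((hasDerivAt_mul_exp_neg_log_div_sq K (v / 2) v hK.ne' hS.ne').const_mul _
    ).congr_of_eventuallyEq hvega).congr_deriv ?_
  rw [show v ^ ((3 : ℝ) / 2) = v * √v by
    rw [sqrt_eq_rpow, ← rpow_one_add' hv.le (by norm_num)]; norm_num]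
  field_simp
  ring
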